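/- arXiv:2508.15775 — 2 statements merged into one kernel-verified Lean document; each statement's English description precedes it below -/
import Mathlib

section
/- Let T: V→g be a Φ-twisted Rota-Baxter operator and ϖ a T-admissible 1-cocycle (i.e. δϖ = 0 and Id_V + ϖ∘T is invertible). Then Id_V + ϖ∘T is an isomorphism of 3-Leibniz algebras from (V, [·,·,·]_T) to (V, [·,·,·]_{T_ϖ}), where T_ϖ = T∘(Id_V + ϖ∘T)^{-1}. -/
open Finset

variable {K : Type*} [Field K]

/-- The (left) Leibniz identity for a binary bracket. -/
def LeibnizRule {A : Type*} [Add A] (br : A → A → A) : Prop :=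
  ∀ x y z, br x (br y z) = br (br x y) z + br y (br x z)

/-- The fundamental identity of a 3-Leibniz algebra. -/
def ThreeLeibnizRule {A : Type*} [Add A] (br : A → A → A → A) : Prop :=
  ∀ a b x y z, br a b (br x y z) = br (br a b x) y z + br x (br a b y) z + br x y (br a b z)

/-- Representation of a 3-Leibniz algebra: the five compatibility equations. -/
def IsRep3 {g V : Type*} [Add g] [Add V]
    (br : g → g → g → g) (ρl : g → g → V → V) (ρm : g → V → g → V) (ρr : V → g → g → V) : Prop :=
  (∀ a b x y u, ρl a b (ρl x y u) = ρl (br a b x) y u + ρl x (br a b y) u + ρl x y (ρl a b u)) ∧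
  (∀ a b x u z, ρl a b (ρm x u z) = ρm (br a b x) u z + ρm x (ρl a b u) z + ρm x u (br a b z)) ∧
  (∀ a b u y z, ρl a b (ρr u y z) = ρr (ρl a b u) y z + ρr u (br a b y) z + ρr u y (br a b z)) ∧
  (∀ a u x y z, ρm a u (br x y z) = ρr (ρm a u x) y z + ρm x (ρm a u y) z + ρl x y (ρm a u z)) ∧
  (∀ u b x y z, ρr u b (br x y z) = ρr (ρr u b x) y z + ρm x (ρr u b y) z + ρl x y (ρr u b z))

/-- 2-cocycle condition for `Φ` in the 3-Leibniz cohomology. -/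
def Is2Cocycle {g V : Type*} [Add g] [AddCommGroup V]
    (br : g → g → g → g) (ρl : g → g → V → V) (ρm : g → V → g → V) (ρr : V → g → g → V)
    (Φ : g → g → g → V) : Prop :=
  ∀ x1 y1 x2 y2 z,
    Φ x1 y1 (br x2 y2 z) - Φ x2 (br x1 y1 y2) z - Φ (br x1 y1 x2) y2 z - Φ x2 y2 (br x1 y1 z)
      + ρl x1 y1 (Φ x2 y2 z) - ρl x2 y2 (Φ x1 y1 z) - ρm x2 (Φ x1 y1 y2) z
      - ρr (Φ x1 y1 x2) y2 z = 0

/-- `T` is a `Φ`-twisted Rota-Baxter operator. -/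
def IsTRB {g V : Type*} [Add g] [Add V]
    (br : g → g → g → g) (ρl : g → g → V → V) (ρm : g → V → g → V) (ρr : V → g → g → V)
    (Φ : g → g → g → V) (T : V → g) : Prop :=
  ∀ u v w, br (T u) (T v) (T w)
    = T (ρl (T u) (T v) w + ρm (T u) v (T w) + ρr u (T v) (T w) + Φ (T u) (T v) (T w))

/-- NS-3-Leibniz algebra: four ternary operations `◁ = tl`, `▷ = tr`, `△ = tt`, `◇ = td`
satisfying the six defining identities, where `⋆` is the sum of the four operations. -/
def IsNS3Leibniz {g : Type*} [Add g] (tl tr tt td : g → g → g → g) : Prop :=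
  let ts : g → g → g → g := fun x y z => tl x y z + tr x y z + tt x y z + td x y z
  (∀ a b x y z, tr a b (tr x y z) = tr (ts a b x) y z + tr x (ts a b y) z + tr x y (tr a b z)) ∧
  (∀ a b x y z, tl a b (ts x y z) = tl (tl a b x) y z + tt x (tl a b y) z + tr x y (tl a b z)) ∧
  (∀ a b x y z, tt a b (ts x y z) = tl (tt a b x) y z + tt x (tt a b y) z + tr x y (tt a b z)) ∧
  (∀ a b x y z, tr a b (tl x y z) = tl (tr a b x) y z + tl x (ts a b y) z + tl x y (ts a b z)) ∧
  (∀ a b x y z, tr a b (td x y z) = tt (ts a b x) y z + tt x (tr a b y) z + tt x y (ts a b z)) ∧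
  (∀ a b x y z, td a b (ts x y z) + tr a b (td x y z)
    = tr x y (td a b z) + td x y (ts a b z) + tt x (td a b y) z + td x (ts a b y) z
      + td (ts a b x) y z + tl (td a b x) y z)

/-!
Write `u' = u + ϖ (T u)`. Since `T_ϖ u' = T u`, the bracket `[u', v', w']_{T_ϖ}` is
`[u, v, w]_T` plus `ρˡ(Tu, Tv, ϖ Tw) + ρᵐ(Tu, ϖ Tv, Tw) + ρʳ(ϖ Tu, Tv, Tw)`, which the cocycle
condition identifies with `ϖ [Tu, Tv, Tw]`; by the twisted Rota–Baxter identity this is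
`ϖ T [u, v, w]_T`.
-/

section TwistedBracket

variable {R g V : Type*} [CommSemiring R] [AddCommMonoid g] [AddCommMonoid V]
  [Module R g] [Module R V]
  (ρl : g →ₗ[R] g →ₗ[R] V →ₗ[R] V) (ρm : g →ₗ[R] V →ₗ[R] g →ₗ[R] V)
  (ρr : V →ₗ[R] g →ₗ[R] g →ₗ[R] V) (Φ : g →ₗ[R] g →ₗ[R] g →ₗ[R] V)

def twistedBracket (T : V → g) (u v w : V) : V :=
  ρl (T u) (T v) w + ρm (T u) v (T w) + ρr u (T v) (T w) + Φ (T u) (T v) (T w)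

def IsOneCocycle (br : g → g → g → g) (ϖ : g →ₗ[R] V) : Prop :=
  ∀ x y z, ϖ (br x y z) = ρl x y (ϖ z) + ρm x (ϖ y) z + ρr (ϖ x) y z

variable {ρl ρm ρr}

theorem twistedBracket_add_comp_of_isOneCocycle {br : g → g → g → g} {ϖ : g →ₗ[R] V}
    (hϖ : IsOneCocycle ρl ρm ρr br ϖ) {T T' : V → g} (hT' : ∀ u, T' (u + ϖ (T u)) = T u)
    (u v w : V) :
    twistedBracket ρl ρm ρr Φ T' (u + ϖ (T u)) (v + ϖ (T v)) (w + ϖ (T w))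
      = twistedBracket ρl ρm ρr Φ T u v w + ϖ (br (T u) (T v) (T w)) := by
  simp only [twistedBracket, hT', map_add, LinearMap.add_apply]
  rw [hϖ]
  abel

theorem add_comp_twistedBracket_of_isTRB {br : g → g → g → g} {ϖ : g →ₗ[R] V}
    (hϖ : IsOneCocycle ρl ρm ρr br ϖ) {T : V → g}
    (hT : IsTRB br (fun x y u => ρl x y u) (fun x u y => ρm x u y) (fun u x y => ρr u x y)
      (fun x y z => Φ x y z) T)
    {T' : V → g} (hT' : ∀ u, T' (u + ϖ (T u)) = T u) (u v w : V) :
    twistedBracket ρl ρm ρr Φ T u v w + ϖ (T (twistedBracket ρl ρm ρr Φ T u v w))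
      = twistedBracket ρl ρm ρr Φ T' (u + ϖ (T u)) (v + ϖ (T v)) (w + ϖ (T w)) := by
  rw [twistedBracket_add_comp_of_isOneCocycle Φ hϖ hT', hT u v w]
  rfl

end TwistedBracket

theorem stmt10_general {g : Type*} [AddCommGroup g] [Module K g] {V : Type*} [AddCommGroup V] [Module K V]
    (br : g →ₗ[K] g →ₗ[K] g →ₗ[K] g)
    (ρl : g →ₗ[K] g →ₗ[K] V →ₗ[K] V) (ρm : g →ₗ[K] V →ₗ[K] g →ₗ[K] V)
    (ρr : V →ₗ[K] g →ₗ[K] g →ₗ[K] V)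
    (Φ : g →ₗ[K] g →ₗ[K] g →ₗ[K] V)
    (T : V →ₗ[K] g)
    (hT : IsTRB (fun x y z : g => br x y z) (fun x y u => ρl x y u)
      (fun x u y => ρm x u y) (fun u x y => ρr u x y) (fun x y z => Φ x y z)
      (fun u => T u))
    (ϖ : g →ₗ[K] V)
    (hcoc : ∀ x y z : g, ϖ (br x y z) = ρl x y (ϖ z) + ρm x (ϖ y) z + ρr (ϖ x) y z)
    (S : V →ₗ[K] V)
    (hS1 : (LinearMap.id + ϖ ∘ₗ T) ∘ₗ S = LinearMap.id)
    (hS2 : S ∘ₗ (LinearMap.id + ϖ ∘ₗ T) = LinearMap.id) :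
    Function.Bijective (fun u : V => u + ϖ (T u)) ∧
    ∀ u v w : V,
      (fun u : V => u + ϖ (T u))
          (ρl (T u) (T v) w + ρm (T u) v (T w) + ρr u (T v) (T w) + Φ (T u) (T v) (T w))
        = (let Tϖ : V → g := fun u => T (S u);
           let u' := u + ϖ (T u); let v' := v + ϖ (T v); let w' := w + ϖ (T w);
           ρl (Tϖ u') (Tϖ v') w' + ρm (Tϖ u') v' (Tϖ w') + ρr u' (Tϖ v') (Tϖ w')
             + Φ (Tϖ u') (Tϖ v') (Tϖ w')) := by
  have hTϖ : ∀ u, T (S (u + ϖ (T u))) = T u := fun u => congrArg T (LinearMap.congr_fun hS2 u)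
  exact ⟨Function.bijective_iff_has_inverse.mpr
    ⟨S, LinearMap.congr_fun hS2, LinearMap.congr_fun hS1⟩,
    add_comp_twistedBracket_of_isTRB (br := fun x y z => br x y z) (T' := fun u => T (S u))
      Φ hcoc hT hTϖ⟩

theorem stmt10 {g : Type*} [AddCommGroup g] [Module K g] {V : Type*} [AddCommGroup V] [Module K V]
    (br : g →ₗ[K] g →ₗ[K] g →ₗ[K] g)
    (h3 : ThreeLeibnizRule (fun x y z : g => br x y z))
    (ρl : g →ₗ[K] g →ₗ[K] V →ₗ[K] V) (ρm : g →ₗ[K] V →ₗ[K] g →ₗ[K] V)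
    (ρr : V →ₗ[K] g →ₗ[K] g →ₗ[K] V)
    (hrep : IsRep3 (fun x y z : g => br x y z) (fun x y u => ρl x y u)
      (fun x u y => ρm x u y) (fun u x y => ρr u x y))
    (Φ : g →ₗ[K] g →ₗ[K] g →ₗ[K] V)
    (hΦ : Is2Cocycle (fun x y z : g => br x y z) (fun x y u => ρl x y u)
      (fun x u y => ρm x u y) (fun u x y => ρr u x y) (fun x y z => Φ x y z))
    (T : V →ₗ[K] g)
    (hT : IsTRB (fun x y z : g => br x y z) (fun x y u => ρl x y u)
      (fun x u y => ρm x u y) (fun u x y => ρr u x y) (fun x y z => Φ x y z)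
      (fun u => T u))
    (ϖ : g →ₗ[K] V)
    (hcoc : ∀ x y z : g, ϖ (br x y z) = ρl x y (ϖ z) + ρm x (ϖ y) z + ρr (ϖ x) y z)
    (S : V →ₗ[K] V)
    (hS1 : (LinearMap.id + ϖ ∘ₗ T) ∘ₗ S = LinearMap.id)
    (hS2 : S ∘ₗ (LinearMap.id + ϖ ∘ₗ T) = LinearMap.id) :
    Function.Bijective (fun u : V => u + ϖ (T u)) ∧
    ∀ u v w : V,
      (fun u : V => u + ϖ (T u))
          (ρl (T u) (T v) w + ρm (T u) v (T w) + ρr u (T v) (T w) + Φ (T u) (T v) (T w))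
        = (let Tϖ : V → g := fun u => T (S u);
           let u' := u + ϖ (T u); let v' := v + ϖ (T v); let w' := w + ϖ (T w);
           ρl (Tϖ u') (Tϖ v') w' + ρm (Tϖ u') v' (Tϖ w') + ρr u' (Tϖ v') (Tϖ w')
             + Φ (Tϖ u') (Tϖ v') (Tϖ w')) :=
  stmt10_general br ρl ρm ρr Φ T hT ϖ hcoc S hS1 hS2
end

section
/- Let T: V→g be a Φ-twisted Rota-Baxter operator. For a,b ∈ g, define ℘(a⊗b): V→g by ℘(a⊗b)(u) = Tρ^l(a,b,u) + TΦ(a,b,Tu) − [a,b,Tu]_g. Then ℘(a⊗b) is a 1-cocycle of the 3-Leibniz algebra (V,[·,·,·]_T) with coefficients in the representation (g; ρ_T^l, ρ_T^m, ρ_T^r). -/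
open Finset

variable {K : Type*} [Field K]

/-! On `g × V` put the `Φ`-twisted semidirect bracket
`[(x,u),(y,v),(z,w)] = ([x,y,z], ρˡ(x,y,w) + ρᵐ(x,v,z) + ρʳ(u,y,z) + Φ(x,y,z))`.
`T` is a `Φ`-twisted Rota–Baxter operator exactly when its graph, the kernel of
`P (x,u) = x - T u`, is closed under this bracket, and the induced representation is
`ρ_Tˡ(u,v,x) = P [(Tu,u),(Tv,v),(x,0)]` (similarly for `ρ_Tᵐ`, `ρ_Tʳ`). The fundamental identity,
the representation axioms and the cocycle condition on `Φ` make `D = [(a,0),(b,0),-]` a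
derivation of the twisted bracket, and `℘(a⊗b)(u) = -P (D (Tu,u))`. For any derivation `D` and
any subalgebra `ker P`, `P ∘ D` is a 1-cocycle of `ker P` with values in the induced
representation: replacing `D Z` by `(P (D Z), 0)` changes it by an element of `ker P`, which the
bracket with two elements of `ker P` sends back into `ker P`. -/

section DerivationCocycle

variable {R M N : Type*} [CommRing R] [AddCommGroup M] [Module R M] [AddCommGroup N] [Module R N]

theorem map_derivation_trilinear_eq_of_ker_closed (B : M →ₗ[R] M →ₗ[R] M →ₗ[R] M)
    (P : M →ₗ[R] N) (ι : N →ₗ[R] M) (hPι : ∀ x, P (ι x) = x)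
    (hker : ∀ X Y Z, P X = 0 → P Y = 0 → P Z = 0 → P (B X Y Z) = 0)
    (D : M → M) (hD : ∀ X Y Z, D (B X Y Z) = B (D X) Y Z + B X (D Y) Z + B X Y (D Z))
    {X Y Z : M} (hX : P X = 0) (hY : P Y = 0) (hZ : P Z = 0) :
    P (D (B X Y Z))
      = P (B X Y (ι (P (D Z)))) + P (B X (ι (P (D Y))) Z) + P (B (ι (P (D X))) Y Z) := by
  have hcorr : ∀ W, P (D W - ι (P (D W))) = 0 := fun W => by simp [hPι]
  have h₃ : P (B X Y (D Z)) = P (B X Y (ι (P (D Z)))) := by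
    simpa [sub_eq_zero] using hker X Y _ hX hY (hcorr Z)
  have h₂ : P (B X (D Y) Z) = P (B X (ι (P (D Y))) Z) := by
    simpa [sub_eq_zero] using hker X _ Z hX (hcorr Y) hZ
  have h₁ : P (B (D X) Y Z) = P (B (ι (P (D X))) Y Z) := by
    simpa [sub_eq_zero] using hker _ Y Z (hcorr X) hY hZ
  rw [hD, map_add, map_add, h₁, h₂, h₃]
  abel

end DerivationCocycle

section TwistedSemidirect

variable {R g V : Type*} [CommRing R] [AddCommGroup g] [Module R g] [AddCommGroup V] [Module R V]
  (br : g →ₗ[R] g →ₗ[R] g →ₗ[R] g) (ρl : g →ₗ[R] g →ₗ[R] V →ₗ[R] V)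
  (ρm : g →ₗ[R] V →ₗ[R] g →ₗ[R] V) (ρr : V →ₗ[R] g →ₗ[R] g →ₗ[R] V)
  (Φ : g →ₗ[R] g →ₗ[R] g →ₗ[R] V)

def twistedSemidirectBracket : (g × V) →ₗ[R] (g × V) →ₗ[R] (g × V) →ₗ[R] (g × V) :=
  LinearMap.mk₂ R
    (fun X Y => LinearMap.prod (br X.1 Y.1 ∘ₗ LinearMap.fst R g V)
      (ρl X.1 Y.1 ∘ₗ LinearMap.snd R g V
        + (ρm X.1 Y.2 + ρr X.2 Y.1 + Φ X.1 Y.1) ∘ₗ LinearMap.fst R g V))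
    (by intros; ext <;> simp; abel) (by intros; ext <;> simp)
    (by intros; ext <;> simp; abel) (by intros; ext <;> simp)

@[simp]
theorem twistedSemidirectBracket_apply (X Y Z : g × V) :
    twistedSemidirectBracket br ρl ρm ρr Φ X Y Z
      = (br X.1 Y.1 Z.1, ρl X.1 Y.1 Z.2 + ρm X.1 Y.2 Z.1 + ρr X.2 Y.1 Z.1 + Φ X.1 Y.1 Z.1) := by
  simp [twistedSemidirectBracket, add_assoc]

theorem twistedSemidirectBracket_inner_derivation
    (h3 : ThreeLeibnizRule (fun x y z : g => br x y z))
    (hrep : IsRep3 (fun x y z : g => br x y z) (fun x y u => ρl x y u)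
      (fun x u y => ρm x u y) (fun u x y => ρr u x y))
    (hΦ : Is2Cocycle (fun x y z : g => br x y z) (fun x y u => ρl x y u)
      (fun x u y => ρm x u y) (fun u x y => ρr u x y) (fun x y z => Φ x y z))
    (a b : g) (X Y Z : g × V) :
    let B := twistedSemidirectBracket br ρl ρm ρr Φ
    let D := B (a, 0) (b, 0)
    D (B X Y Z) = B (D X) Y Z + B X (D Y) Z + B X Y (D Z) := by
  obtain ⟨x, u⟩ := X
  obtain ⟨y, v⟩ := Y
  obtain ⟨z, w⟩ := Z
  obtain ⟨hll, hlm, hlr, -, -⟩ := hrep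
  have hΦab : Φ a b (br x y z) + ρl a b (Φ x y z)
      = Φ x (br a b y) z + Φ (br a b x) y z + Φ x y (br a b z)
        + ρl x y (Φ a b z) + ρm x (Φ a b y) z + ρr (Φ a b x) y z :=
    eq_of_sub_eq_zero (by rw [← hΦ a b x y z]; abel)
  ext
  · simpa using h3 a b x y z
  · dsimp only at hll hlm hlr
    simp only [twistedSemidirectBracket_apply, map_add, map_zero, LinearMap.add_apply,
      LinearMap.zero_apply, add_zero, Prod.snd_add]
    rw [hll, hlm, hlr]
    linear_combination (norm := abel) hΦab

def graphDefect (T : V →ₗ[R] g) : g × V →ₗ[R] g :=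
  LinearMap.fst R g V - T ∘ₗ LinearMap.snd R g V

@[simp]
theorem graphDefect_apply (T : V →ₗ[R] g) (X : g × V) : graphDefect T X = X.1 - T X.2 := rfl

variable {br ρl ρm ρr Φ} {T : V →ₗ[R] g}

theorem twistedSemidirectBracket_graph
    (hT : IsTRB (fun x y z : g => br x y z) (fun x y u => ρl x y u)
      (fun x u y => ρm x u y) (fun u x y => ρr u x y) (fun x y z => Φ x y z) (fun u => T u))
    (u v w : V) :
    twistedSemidirectBracket br ρl ρm ρr Φ (T u, u) (T v, v) (T w, w)
      = (T (ρl (T u) (T v) w + ρm (T u) v (T w) + ρr u (T v) (T w) + Φ (T u) (T v) (T w)),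
          ρl (T u) (T v) w + ρm (T u) v (T w) + ρr u (T v) (T w) + Φ (T u) (T v) (T w)) := by
  simpa using hT u v w

theorem graphDefect_twistedSemidirectBracket_eq_zero
    (hT : IsTRB (fun x y z : g => br x y z) (fun x y u => ρl x y u)
      (fun x u y => ρm x u y) (fun u x y => ρr u x y) (fun x y z => Φ x y z) (fun u => T u))
    {X Y Z : g × V} (hX : graphDefect T X = 0) (hY : graphDefect T Y = 0)
    (hZ : graphDefect T Z = 0) :
    graphDefect T (twistedSemidirectBracket br ρl ρm ρr Φ X Y Z) = 0 := by
  obtain ⟨x, u⟩ := X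
  obtain ⟨y, v⟩ := Y
  obtain ⟨z, w⟩ := Z
  simp only [graphDefect_apply, sub_eq_zero] at hX hY hZ
  subst hX hY hZ
  simp [twistedSemidirectBracket_graph hT]

end TwistedSemidirect

theorem stmt14 {g : Type*} [AddCommGroup g] [Module K g] {V : Type*} [AddCommGroup V] [Module K V]
    (br : g →ₗ[K] g →ₗ[K] g →ₗ[K] g)
    (h3 : ThreeLeibnizRule (fun x y z : g => br x y z))
    (ρl : g →ₗ[K] g →ₗ[K] V →ₗ[K] V) (ρm : g →ₗ[K] V →ₗ[K] g →ₗ[K] V)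
    (ρr : V →ₗ[K] g →ₗ[K] g →ₗ[K] V)
    (hrep : IsRep3 (fun x y z : g => br x y z) (fun x y u => ρl x y u)
      (fun x u y => ρm x u y) (fun u x y => ρr u x y))
    (Φ : g →ₗ[K] g →ₗ[K] g →ₗ[K] V)
    (hΦ : Is2Cocycle (fun x y z : g => br x y z) (fun x y u => ρl x y u)
      (fun x u y => ρm x u y) (fun u x y => ρr u x y) (fun x y z => Φ x y z))
    (T : V →ₗ[K] g)
    (hT : IsTRB (fun x y z : g => br x y z) (fun x y u => ρl x y u)
      (fun x u y => ρm x u y) (fun u x y => ρr u x y) (fun x y z => Φ x y z)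
      (fun u => T u))
    (a b : g) :
    ∀ u v w : V,
      (fun u : V => T (ρl a b u) + T (Φ a b (T u)) - br a b (T u))
          (ρl (T u) (T v) w + ρm (T u) v (T w) + ρr u (T v) (T w) + Φ (T u) (T v) (T w))
        = (br (T u) (T v) ((fun u : V => T (ρl a b u) + T (Φ a b (T u)) - br a b (T u)) w)
            - T (ρm (T u) v ((fun u : V => T (ρl a b u) + T (Φ a b (T u)) - br a b (T u)) w)
              + ρr u (T v) ((fun u : V => T (ρl a b u) + T (Φ a b (T u)) - br a b (T u)) w)
              + Φ (T u) (T v) ((fun u : V => T (ρl a b u) + T (Φ a b (T u)) - br a b (T u)) w)))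
          + (br (T u) ((fun u : V => T (ρl a b u) + T (Φ a b (T u)) - br a b (T u)) v) (T w)
            - T (ρl (T u) ((fun u : V => T (ρl a b u) + T (Φ a b (T u)) - br a b (T u)) v) w
              + ρr u ((fun u : V => T (ρl a b u) + T (Φ a b (T u)) - br a b (T u)) v) (T w)
              + Φ (T u) ((fun u : V => T (ρl a b u) + T (Φ a b (T u)) - br a b (T u)) v) (T w)))
          + (br ((fun u : V => T (ρl a b u) + T (Φ a b (T u)) - br a b (T u)) u) (T v) (T w)
            - T (ρl ((fun u : V => T (ρl a b u) + T (Φ a b (T u)) - br a b (T u)) u) (T v) w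
              + ρm ((fun u : V => T (ρl a b u) + T (Φ a b (T u)) - br a b (T u)) u) v (T w)
              + Φ ((fun u : V => T (ρl a b u) + T (Φ a b (T u)) - br a b (T u)) u) (T v) (T w))) := by
  intro u v w
  let B := twistedSemidirectBracket br ρl ρm ρr Φ
  have hcocycle := map_derivation_trilinear_eq_of_ker_closed B (graphDefect T) (LinearMap.inl K g V)
    (fun x => by simp) (fun X Y Z => graphDefect_twistedSemidirectBracket_eq_zero hT)
    (B (a, 0) (b, 0)) (twistedSemidirectBracket_inner_derivation br ρl ρm ρr Φ h3 hrep hΦ a b)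
    (X := (T u, u)) (Y := (T v, v)) (Z := (T w, w)) (by simp) (by simp) (by simp)
  rw [twistedSemidirectBracket_graph hT] at hcocycle
  simp only [B, twistedSemidirectBracket_apply, graphDefect_apply, LinearMap.coe_inl, map_zero,
    LinearMap.zero_apply, add_zero, zero_add, map_add, map_sub, LinearMap.add_apply,
    LinearMap.sub_apply] at hcocycle ⊢
  linear_combination (norm := module) -hcocycle
end
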